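/- arXiv:1906.03644 — 4 statements merged into one kernel-verified Lean document; each statement's English description precedes it below -/
import Mathlib

section
/- For a probability density α(x) and a positive integrable function f(x) with normalization constant C = ∫ f(x) dx, the squared total variation distance ‖α − f‖_TV² = (½ ∫ |α(x) − f(x)| dx)² is at most ((2C + 1)/6) · (KL̂(α‖f) + C − 1), where KL̂(α‖f) = ∫ α(x) log(α(x)/f(x)) dx. -/
/-!
With `φ r = r log r + 1 - r` (`klFun`), the integrand of `KL̂(α‖f) + C - 1` is `f φ(α/f)`. The
elementary bound `3 (r - 1)² ≤ 2 (r + 2) φ r` turns pointwise into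
`(α - f)² / (α + 2f) ≤ (2/3) f φ(α/f)`, and Cauchy–Schwarz with the weight `α + 2f`, of total
mass `1 + 2C`, gives `(∫ |α - f|)² ≤ (1 + 2C) ∫ (α - f)² / (α + 2f)`.
-/

open MeasureTheory Real InformationTheory Set

lemma monotoneOn_add_one_mul_log_sub_two_mul :
    MonotoneOn (fun r : ℝ => (r + 1) * log r - 2 * (r - 1)) (Ioi 0) := by
  refine monotoneOn_of_hasDerivWithinAt_nonneg (f' := fun r => log r + r⁻¹ - 1) (convex_Ioi 0)
    (by fun_prop (disch := grind)) (fun r hr => ?_) (fun r hr => ?_) <;>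
    rw [interior_Ioi, mem_Ioi] at hr
  · have hd := ((hasDerivAt_id r).add_const 1).mul (hasDerivAt_log hr.ne') |>.sub
      (((hasDerivAt_id r).sub_const 1).const_mul 2)
    refine (hd.congr_deriv ?_).hasDerivWithinAt
    simp only [id_eq]
    field_simp
    ring
  · linarith [one_sub_inv_le_log_of_pos hr]

lemma add_one_mul_log_le_two_mul_sub_one {r : ℝ} (hr₀ : 0 < r) (hr₁ : r ≤ 1) :
    (r + 1) * log r ≤ 2 * (r - 1) := by
  simpa using monotoneOn_add_one_mul_log_sub_two_mul hr₀ (mem_Ioi.2 one_pos) hr₁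

lemma two_mul_sub_one_le_add_one_mul_log {r : ℝ} (hr : 1 ≤ r) :
    2 * (r - 1) ≤ (r + 1) * log r := by
  simpa using monotoneOn_add_one_mul_log_sub_two_mul (mem_Ioi.2 one_pos)
    (mem_Ioi.2 (one_pos.trans_le hr)) hr

lemma three_mul_sub_one_sq_le_klFun {r : ℝ} (hr : 0 ≤ r) :
    3 * (r - 1) ^ 2 ≤ 2 * (r + 2) * klFun r := by
  rcases hr.eq_or_lt with rfl | hr
  · norm_num [klFun_zero]
  set h : ℝ → ℝ := fun s => 2 * (s + 2) * klFun s - 3 * (s - 1) ^ 2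
  have hderiv : ∀ s ≠ 0, HasDerivAt h (4 * ((s + 1) * log s - 2 * (s - 1))) s := fun s hs => by
    have hd := ((((hasDerivAt_id s).add_const 2).const_mul 2).mul (hasDerivAt_klFun hs)).sub
      (((hasDerivAt_id s).sub_const 1).pow 2 |>.const_mul 3)
    exact hd.congr_deriv (by simp [klFun_apply]; ring)
  -- `h' = 4 ((s + 1) log s - 2 (s - 1))` has the sign of `s - 1`
  have hmin : IsMinOn h (Ioi 0) 1 := by
    refine isMinOn_Ioi_of_deriv (hderiv 1 one_ne_zero).continuousAt
      (fun s hs => (hderiv s hs.1.ne').differentiableAt.differentiableWithinAt)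
      (fun s hs => (hderiv s (zero_lt_one.trans hs).ne').differentiableAt.differentiableWithinAt)
      (fun s hs => ?_) (fun s hs => ?_)
    · rw [(hderiv s hs.1.ne').deriv]
      linarith [add_one_mul_log_le_two_mul_sub_one hs.1 hs.2.le]
    · rw [(hderiv s (zero_lt_one.trans hs).ne').deriv]
      linarith [two_mul_sub_one_le_add_one_mul_log (le_of_lt hs)]
  have := hmin hr
  simp only [mem_ofPred_eq, h, klFun_one] at this
  linarith

lemma sq_sub_div_add_two_mul_le {a b : ℝ} (ha : 0 ≤ a) (hb : 0 < b) :
    (a - b) ^ 2 / (a + 2 * b) ≤ 2 / 3 * (a * log (a / b) + b - a) := by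
  have key := mul_le_mul_of_nonneg_left (three_mul_sub_one_sq_le_klFun (div_nonneg ha hb.le))
    (sq_nonneg b)
  rw [klFun_apply] at key
  field_simp at key
  rw [div_le_iff₀ (by positivity)]
  linarith

section CauchySchwarz

variable {X : Type*} [MeasurableSpace X] {μ : Measure X}

lemma sq_integral_mul_le_integral_sq_mul_integral_sq {f g : X → ℝ} (hf₀ : 0 ≤ᵐ[μ] f)
    (hg₀ : 0 ≤ᵐ[μ] g) (hf : MemLp f 2 μ) (hg : MemLp g 2 μ) :
    (∫ x, f x * g x ∂μ) ^ 2 ≤ (∫ x, f x ^ 2 ∂μ) * ∫ x, g x ^ 2 ∂μ := by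
  have holder := integral_mul_le_Lp_mul_Lq_of_nonneg HolderConjugate.two_two hf₀ hg₀
    (by simpa using hf) (by simpa using hg)
  simp only [rpow_two, ← sqrt_eq_rpow] at holder
  have hfg₀ : 0 ≤ ∫ x, f x * g x ∂μ := integral_nonneg_of_ae <| by
    filter_upwards [hf₀, hg₀] with x hfx hgx using mul_nonneg hfx hgx
  calc (∫ x, f x * g x ∂μ) ^ 2
      ≤ (√(∫ x, f x ^ 2 ∂μ) * √(∫ x, g x ^ 2 ∂μ)) ^ 2 := pow_le_pow_left₀ hfg₀ holder 2
    _ = _ := by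
      rw [mul_pow, sq_sqrt (integral_nonneg fun _ => sq_nonneg _),
        sq_sqrt (integral_nonneg fun _ => sq_nonneg _)]

lemma MeasureTheory.Integrable.memLp_two_sqrt {f : X → ℝ} (hf : Integrable f μ) (hf₀ : 0 ≤ᵐ[μ] f) :
    MemLp (fun x => √(f x)) 2 μ := by
  refine (memLp_two_iff_integrable_sq (continuous_sqrt.comp_aestronglyMeasurable hf.1)).2 ?_
  refine hf.congr ?_
  filter_upwards [hf₀] with x hx using (sq_sqrt hx).symm

lemma sq_integral_abs_le_integral_sq_div_mul_integral {g w : X → ℝ} (hw₀ : ∀ᵐ x ∂μ, 0 < w x)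
    (hgw : Integrable (fun x => g x ^ 2 / w x) μ) (hw : Integrable w μ) :
    (∫ x, |g x| ∂μ) ^ 2 ≤ (∫ x, g x ^ 2 / w x ∂μ) * ∫ x, w x ∂μ := by
  have hgw₀ : 0 ≤ᵐ[μ] fun x => g x ^ 2 / w x := by
    filter_upwards [hw₀] with x hx using div_nonneg (sq_nonneg _) hx.le
  have hw₀' : 0 ≤ᵐ[μ] w := by filter_upwards [hw₀] with x hx using hx.le
  have cs := sq_integral_mul_le_integral_sq_mul_integral_sq (ae_of_all _ fun x => sqrt_nonneg _)
    (ae_of_all _ fun x => sqrt_nonneg _) (hgw.memLp_two_sqrt hgw₀) (hw.memLp_two_sqrt hw₀')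
  convert cs using 2
  · refine integral_congr_ae ?_
    filter_upwards [hw₀] with x hx
    rw [← sqrt_mul (div_nonneg (sq_nonneg _) hx.le), div_mul_cancel₀ _ hx.ne', sqrt_sq_eq_abs]
  · exact integral_congr_ae (by filter_upwards [hgw₀] with x hx using (sq_sqrt hx).symm)
  · exact integral_congr_ae (by filter_upwards [hw₀'] with x hx using (sq_sqrt hx).symm)

end CauchySchwarz

/-- Generalized Pinsker inequality for an unnormalized second argument:
for a probability density `α` and a positive integrable function `f` with
normalization constant `C = ∫ f`, the squared TV distance
`(½ ∫ |α − f|)²` is bounded by `((2C+1)/6)(KL̂(α‖f) + C − 1)`,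
where `KL̂(α‖f) = ∫ α log(α/f)`. -/
theorem generalized_pinsker {D : ℕ} (α f : (Fin D → ℝ) → ℝ) (C : ℝ)
    (hα_nonneg : ∀ x, 0 ≤ α x) (hα_int : Integrable α)
    (hα_norm : ∫ x, α x = 1)
    (hf_pos : ∀ x, 0 < f x) (hf_int : Integrable f)
    (hC : C = ∫ x, f x)
    (hKL_int : Integrable (fun x => α x * Real.log (α x / f x))) :
    ((1 / 2) * ∫ x, |α x - f x|) ^ 2 ≤
      ((2 * C + 1) / 6) * ((∫ x, α x * Real.log (α x / f x)) + C - 1) := by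
  set KL := ∫ x, α x * log (α x / f x)
  have hw_pos : ∀ x, 0 < α x + 2 * f x := fun x => by linarith [hα_nonneg x, hf_pos x]
  have hbound : ∀ x, (α x - f x) ^ 2 / (α x + 2 * f x) ≤
      2 / 3 * (α x * log (α x / f x) + f x - α x) :=
    fun x => sq_sub_div_add_two_mul_le (hα_nonneg x) (hf_pos x)
  have hKLf_int : Integrable fun x => α x * log (α x / f x) + f x := hKL_int.add hf_int
  have hbound_int : Integrable fun x => 2 / 3 * (α x * log (α x / f x) + f x - α x) :=
    (hKLf_int.sub hα_int).const_mul _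
  have hchi_int : Integrable fun x => (α x - f x) ^ 2 / (α x + 2 * f x) := by
    have := hα_int.aemeasurable
    have := hf_int.aemeasurable
    have hmeas : AEMeasurable fun x => (α x - f x) ^ 2 / (α x + 2 * f x) := by fun_prop
    refine hbound_int.mono' hmeas.aestronglyMeasurable (ae_of_all _ fun x => ?_)
    rw [norm_of_nonneg (div_nonneg (sq_nonneg _) (hw_pos x).le)]
    exact hbound x
  have hchi : ∫ x, (α x - f x) ^ 2 / (α x + 2 * f x) ≤ 2 / 3 * (KL + C - 1) := by
    refine (integral_mono hchi_int hbound_int hbound).trans_eq ?_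
    rw [integral_const_mul, integral_sub hKLf_int hα_int,
      integral_add hKL_int hf_int, hα_norm, hC]
  have hmass : ∫ x, (α x + 2 * f x) = 1 + 2 * C := by
    rw [integral_add hα_int (hf_int.const_mul 2), integral_const_mul, hα_norm, hC]
  have hcs := sq_integral_abs_le_integral_sq_div_mul_integral (ae_of_all _ hw_pos) hchi_int
    (hα_int.add (hf_int.const_mul 2))
  rw [hmass] at hcs
  have hC₀ : 0 ≤ C := hC ▸ integral_nonneg fun x => (hf_pos x).le
  calc ((1 / 2) * ∫ x, |α x - f x|) ^ 2
      ≤ (∫ x, (α x - f x) ^ 2 / (α x + 2 * f x)) * (1 + 2 * C) / 4 := by linarith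
    _ ≤ 2 / 3 * (KL + C - 1) * (1 + 2 * C) / 4 := by gcongr
    _ = (2 * C + 1) / 6 * (KL + C - 1) := by ring
end

section
/- For all real r ≥ −1, (1 + r) log(1 + r) − r ≥ (1/2) · r² / (1 + r/3). -/
/-!
With `x = 1 + r` the inequality is `x` times the rational lower bound
`(x - 1)(5x + 1) / (2x(x + 2)) ≤ log x` (the two sides agree after clearing denominators).
The gap `log x - (x - 1)(5x + 1) / (2x(x + 2))` has derivative `(x - 1)³ / (x²(x + 2)²)`,
which has the sign of `x - 1`, so the gap is minimal at `x = 1`, where it vanishes.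
-/

open Real Set

theorem isMinOn_of_hasDerivAt_nonpos_nonneg {f f' : ℝ → ℝ} {s : Set ℝ} {a : ℝ}
    (hs : Convex ℝ s) (ha : a ∈ s) (hf : ∀ x ∈ s, HasDerivAt f (f' x) x)
    (h_left : ∀ x ∈ s, x < a → f' x ≤ 0) (h_right : ∀ x ∈ s, a < x → 0 ≤ f' x) :
    IsMinOn f s a := by
  intro x hx
  have hcont : ∀ {b c}, Icc b c ⊆ s → ContinuousOn f (Icc b c) := fun hsub y hy =>
    (hf y (hsub hy)).continuousAt.continuousWithinAt
  rcases le_total a x with hax | hxa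
  · have hsub : Icc a x ⊆ s := hs.ordConnected.out ha hx
    refine monotoneOn_of_hasDerivWithinAt_nonneg (f' := f') (convex_Icc a x) (hcont hsub)
      (fun y hy => ?_) (fun y hy => ?_) (left_mem_Icc.2 hax) (right_mem_Icc.2 hax) hax
    all_goals rw [interior_Icc] at hy
    · exact (hf y (hsub (Ioo_subset_Icc_self hy))).hasDerivWithinAt
    · exact h_right y (hsub (Ioo_subset_Icc_self hy)) hy.1
  · have hsub : Icc x a ⊆ s := hs.ordConnected.out hx ha
    refine antitoneOn_of_hasDerivWithinAt_nonpos (f' := f') (convex_Icc x a) (hcont hsub)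
      (fun y hy => ?_) (fun y hy => ?_) (left_mem_Icc.2 hxa) (right_mem_Icc.2 hxa) hxa
    all_goals rw [interior_Icc] at hy
    · exact (hf y (hsub (Ioo_subset_Icc_self hy))).hasDerivWithinAt
    · exact h_left y (hsub (Ioo_subset_Icc_self hy)) hy.2

theorem hasDerivAt_log_sub_rational {x : ℝ} (hx : 0 < x) :
    HasDerivAt (fun y => log y - (y - 1) * (5 * y + 1) / (2 * y * (y + 2)))
      ((x - 1) ^ 3 / (x ^ 2 * (x + 2) ^ 2)) x := by
  have hnum : HasDerivAt (fun y : ℝ => (y - 1) * (5 * y + 1)) (10 * x - 4) x :=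
    (((hasDerivAt_id' x).sub_const 1).mul
      (((hasDerivAt_id' x).const_mul 5).add_const 1)).congr_deriv (by ring)
  have hden : HasDerivAt (fun y : ℝ => 2 * y * (y + 2)) (4 * x + 4) x :=
    (((hasDerivAt_id' x).const_mul 2).mul ((hasDerivAt_id' x).add_const 2)).congr_deriv (by ring)
  refine ((hasDerivAt_log hx.ne').sub (hnum.div hden (by positivity))).congr_deriv ?_
  field_simp
  ring

theorem rational_le_log {x : ℝ} (hx : 0 < x) :
    (x - 1) * (5 * x + 1) / (2 * x * (x + 2)) ≤ log x := by
  have hmin := isMinOn_of_hasDerivAt_nonpos_nonneg (convex_Ioi 0) (mem_Ioi.2 one_pos)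
    (fun y hy => hasDerivAt_log_sub_rational hy)
    (fun y _ hy => div_nonpos_of_nonpos_of_nonneg
      (Odd.pow_nonpos (by decide) (by linarith)) (by positivity))
    (fun y _ hy => div_nonneg (pow_nonneg (by linarith) 3) (by positivity))
    (mem_Ioi.2 hx)
  simpa using hmin

/-- For all real `r ≥ -1`, `(1+r) log(1+r) − r ≥ ½ r² / (1 + r/3)`
(at `r = -1` the left side is `0` since `Real.log 0 = 0`). -/
theorem pointwise_pinsker_ineq (r : ℝ) (hr : -1 ≤ r) :
    (1 + r) * Real.log (1 + r) - r ≥ (1 / 2) * r ^ 2 / (1 + r / 3) := by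
  rcases hr.eq_or_lt with rfl | hr
  · norm_num
  have hx : 0 < 1 + r := by linarith
  have h3 : 3 + r ≠ 0 := by linarith
  calc (1 / 2) * r ^ 2 / (1 + r / 3)
      = (1 + r) * ((1 + r - 1) * (5 * (1 + r) + 1) / (2 * (1 + r) * (1 + r + 2))) - r := by
        field_simp
        ring
    _ ≤ (1 + r) * log (1 + r) - r := by gcongr; exact rational_le_log hx
end

section
/- The function d*(x,y) satisfying d*(x,y)/d*(y,x) = q(y|x)p(x)/(q(x|y)p(y)) is a stationary point of the objective L(d) = E_{x∼p, y∼q(·|x)}[ log(d(y,x)/d(x,y)) + d(y,x)/d(x,y) ], and at this point L(d*) = 1 − KL(q(y|x)p(x) ‖ q(x|y)p(y)). -/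
/-!
Write `A (x, y) = p x * q y x`, so that the reverse joint density is `A ∘ swap`. Nothing makes
`A` jointly measurable, but `A - A ∘ swap` is a measurable function of the integrable
Kullback–Leibler integrand `F = A log (A / A ∘ swap)` and of `F ∘ swap`. Being antisymmetric and
bounded above by `A`, whose iterated integral is `1`, it is integrable with integral `0`. So
`A ∘ swap` also has iterated integral `1`, and at `d*` the integrand of the objective is
`A ∘ swap - F`, which gives `1 - KL`.

For any other `d`, put `r = d(y,x)/d(x,y)`. Applying `log t ≤ t - 1` at `t = r A / A ∘ swap` and
at its inverse gives `A + A ∘ swap ≤ A (log r + r) + A ∘ swap (log r⁻¹ + r⁻¹) + F + F ∘ swap`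
pointwise; integrating over all pairs of transposed points yields `L(d*) ≤ L(d)`.
-/

open MeasureTheory

namespace Real

theorem mul_log_div_add_div_eq {a b : ℝ} (ha : a ≠ 0) :
    a * (log (b / a) + b / a) = b - a * log (a / b) := by
  rw [mul_add, mul_div_cancel₀ b ha, ← inv_div a b, log_inv]
  ring

/-- At `a = b` both sides vanish, thanks to `0 / 0 = 0` and `log 0 = 0`. -/
theorem sub_eq_div_log_of_mul_log {a b : ℝ} (ha : 0 < a) (hb : 0 < b) :
    a - b = (a * log (a / b) + b * log (b / a)) /
      log (-(a * log (a / b) / (b * log (b / a)))) := by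
  rcases eq_or_ne a b with rfl | hab
  · simp
  have hlog : log (a / b) ≠ 0 := by
    rw [log_div ha.ne' hb.ne']
    exact sub_ne_zero.2 fun h => hab (log_injOn_pos ha hb h)
  rw [← inv_div a b, log_inv, mul_neg, div_neg, neg_neg, mul_div_mul_right _ _ hlog]
  field_simp
  ring

theorem add_le_mul_log_add_mul_log_inv {a b r : ℝ} (ha : 0 < a) (hb : 0 < b) (hr : 0 < r) :
    a + b ≤ a * (log r + r) + b * (log r⁻¹ + r⁻¹) + a * log (a / b) + b * log (b / a) := by
  set s := r * a / b
  have hs : 0 < s := by positivity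
  have hlog_s : log s = log r + log a - log b := by
    rw [log_div (by positivity) hb.ne', log_mul hr.ne' ha.ne']
  have h₁ := log_le_sub_one_of_pos hs
  have h₂ := log_le_sub_one_of_pos (inv_pos.2 hs)
  have hrs : a * r = b * s := by simp only [s]; field_simp
  have hrs' : b * r⁻¹ = a * s⁻¹ := by simp only [s]; field_simp
  rw [log_inv, hlog_s] at h₂
  rw [hlog_s] at h₁
  rw [log_inv, log_div ha.ne' hb.ne', log_div hb.ne' ha.ne', mul_add, mul_add, hrs, hrs']
  nlinarith [mul_le_mul_of_nonneg_left h₁ hb.le, mul_le_mul_of_nonneg_left h₂ ha.le]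

end Real

section IteratedIntegrals

variable {α β : Type*} [MeasurableSpace α] [MeasurableSpace β] {μ : Measure α} {ν : Measure β}
  [SFinite ν]

theorem integral_integral_sub_integral_prod [SFinite μ] {f g : α × β → ℝ}
    (hf_slice : ∀ᵐ x ∂μ, Integrable (fun y => f (x, y)) ν)
    (hf : Integrable (fun x => ∫ y, f (x, y) ∂ν) μ) (hg : Integrable g (μ.prod ν)) :
    ∫ x, ∫ y, (f (x, y) - g (x, y)) ∂ν ∂μ =
      ∫ x, ∫ y, f (x, y) ∂ν ∂μ - ∫ z, g z ∂(μ.prod ν) := by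
  have hslice : ∀ᵐ x ∂μ, ∫ y, (f (x, y) - g (x, y)) ∂ν =
      ∫ y, f (x, y) ∂ν - ∫ y, g (x, y) ∂ν := by
    filter_upwards [hf_slice, hg.prod_right_ae] with x hfx hgx using integral_sub hfx hgx
  rw [integral_congr_ae hslice, integral_sub hf hg.integral_prod_left, integral_prod _ hg]

theorem integral_integral_le_integral_prod [SFinite μ] {f g : α × β → ℝ}
    (hf_slice : ∀ᵐ x ∂μ, Integrable (fun y => f (x, y)) ν)
    (hf : Integrable (fun x => ∫ y, f (x, y) ∂ν) μ) (hg : Integrable g (μ.prod ν))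
    (hfg : ∀ z, f z ≤ g z) :
    ∫ x, ∫ y, f (x, y) ∂ν ∂μ ≤ ∫ z, g z ∂(μ.prod ν) := by
  rw [integral_prod _ hg]
  refine integral_mono_ae hf hg.integral_prod_left ?_
  filter_upwards [hf_slice, hg.prod_right_ae] with x hfx hgx
  exact integral_mono hfx hgx fun y => hfg (x, y)

theorem integrable_prod_of_le_of_integrable_integral {f g : α × β → ℝ}
    (hf : AEStronglyMeasurable f (μ.prod ν)) (hf_nonneg : ∀ z, 0 ≤ f z) (hfg : ∀ z, f z ≤ g z)
    (hg_slice : ∀ᵐ x ∂μ, Integrable (fun y => g (x, y)) ν)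
    (hg : Integrable (fun x => ∫ y, g (x, y) ∂ν) μ) :
    Integrable f (μ.prod ν) := by
  refine ⟨hf, (hasFiniteIntegral_iff_ofReal (ae_of_all _ hf_nonneg)).2 ?_⟩
  calc ∫⁻ z, ENNReal.ofReal (f z) ∂(μ.prod ν)
      = ∫⁻ x, ∫⁻ y, ENNReal.ofReal (f (x, y)) ∂ν ∂μ :=
        lintegral_prod _ hf.aemeasurable.ennreal_ofReal
    _ ≤ ∫⁻ x, ∫⁻ y, ENNReal.ofReal (g (x, y)) ∂ν ∂μ :=
        lintegral_mono fun x => lintegral_mono fun y => ENNReal.ofReal_le_ofReal (hfg _)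
    _ = ∫⁻ x, ENNReal.ofReal (∫ y, g (x, y) ∂ν) ∂μ := by
        refine lintegral_congr_ae ?_
        filter_upwards [hg_slice] with x hgx
        exact (ofReal_integral_eq_lintegral_ofReal hgx
          (ae_of_all _ fun y => (hf_nonneg _).trans (hfg _))).symm
    _ < ⊤ := hg.lintegral_lt_top

end IteratedIntegrals

section Antisymmetric

variable {α : Type*} [MeasurableSpace α] {μ : Measure α} [SFinite μ]

theorem integral_prod_eq_zero_of_swap_eq_neg {f : α × α → ℝ} (hf : ∀ z, f z.swap = -f z) :
    ∫ z, f z ∂(μ.prod μ) = 0 := by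
  have h := integral_prod_swap (μ := μ) (ν := μ) f
  simp only [hf, integral_neg] at h
  linarith

theorem integrable_prod_of_swap_eq_neg {f g : α × α → ℝ}
    (hf : AEStronglyMeasurable f (μ.prod μ)) (hf_swap : ∀ z, f z.swap = -f z)
    (hfg : ∀ z, f z ≤ g z) (hg_nonneg : ∀ z, 0 ≤ g z)
    (hg_slice : ∀ᵐ x ∂μ, Integrable (fun y => g (x, y)) μ)
    (hg : Integrable (fun x => ∫ y, g (x, y) ∂μ) μ) :
    Integrable f (μ.prod μ) := by
  have hpos : Integrable (fun z => max (f z) 0) (μ.prod μ) :=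
    integrable_prod_of_le_of_integrable_integral
      (hf.aemeasurable.max aemeasurable_const).aestronglyMeasurable (fun z => le_max_right _ _)
      (fun z => max_le (hfg z) (hg_nonneg z)) hg_slice hg
  have hf_eq : f = fun z => max (f z) 0 - max (f z.swap) 0 := by
    funext z
    rw [hf_swap, max_zero_sub_max_neg_zero_eq_self]
  rw [hf_eq]
  exact hpos.sub hpos.swap

theorem integral_prod_add_swap {f : α × α → ℝ} (hf : Integrable f (μ.prod μ)) :
    ∫ z, (f z + f z.swap) ∂(μ.prod μ) = 2 * ∫ z, f z ∂(μ.prod μ) := by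
  rw [integral_add (g := fun z : α × α => f z.swap) hf hf.swap, integral_prod_swap]
  ring

end Antisymmetric

section Transpose

variable {α : Type*} [MeasurableSpace α] {μ : Measure α} [SFinite μ] {A : α × α → ℝ}

noncomputable def klSwapIntegrand (A : α × α → ℝ) (z : α × α) : ℝ :=
  A z * Real.log (A z / A z.swap)

/-- `A - A ∘ swap` is a measurable function of the Kullback–Leibler integrand and its transpose,
although `A` itself need not be measurable. -/
theorem aestronglyMeasurable_sub_swap (hA : ∀ z, 0 < A z)
    (hKL : AEStronglyMeasurable (klSwapIntegrand A) (μ.prod μ)) :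
    AEStronglyMeasurable (fun z => A z - A z.swap) (μ.prod μ) := by
  have hKL' := hKL.prod_swap
  have h := ((hKL.add hKL').aemeasurable.div
    (Real.measurable_log.comp_aemeasurable (hKL.aemeasurable.div hKL'.aemeasurable).neg))
  refine h.aestronglyMeasurable.congr (ae_of_all _ fun z => ?_)
  simp only [klSwapIntegrand, Prod.swap_swap]
  exact (Real.sub_eq_div_log_of_mul_log (hA z) (hA z.swap)).symm

theorem integrable_sub_swap (hA : ∀ z, 0 < A z)
    (hA_slice : ∀ᵐ x ∂μ, Integrable (fun y => A (x, y)) μ)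
    (hA_int : Integrable (fun x => ∫ y, A (x, y) ∂μ) μ)
    (hKL : AEStronglyMeasurable (klSwapIntegrand A) (μ.prod μ)) :
    Integrable (fun z => A z - A z.swap) (μ.prod μ) :=
  integrable_prod_of_swap_eq_neg (aestronglyMeasurable_sub_swap hA hKL)
    (fun z => by simp only [Prod.swap_swap, neg_sub]) (fun z => by linarith [hA z.swap])
    (fun z => (hA z).le) hA_slice hA_int

theorem integral_sub_swap_eq_zero :
    ∫ z, (A z - A z.swap) ∂(μ.prod μ) = 0 :=
  integral_prod_eq_zero_of_swap_eq_neg fun z => by simp only [Prod.swap_swap, neg_sub]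

theorem integral_integral_swap_sub_klSwapIntegrand (hA : ∀ z, 0 < A z)
    (hA_slice : ∀ᵐ x ∂μ, Integrable (fun y => A (x, y)) μ)
    (hA_int : Integrable (fun x => ∫ y, A (x, y) ∂μ) μ)
    (hKL : Integrable (klSwapIntegrand A) (μ.prod μ)) :
    ∫ x, ∫ y, (A (y, x) - klSwapIntegrand A (x, y)) ∂μ ∂μ =
      ∫ x, ∫ y, A (x, y) ∂μ ∂μ - ∫ z, klSwapIntegrand A z ∂(μ.prod μ) := by
  have hD := integrable_sub_swap hA hA_slice hA_int hKL.aestronglyMeasurable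
  calc ∫ x, ∫ y, (A (y, x) - klSwapIntegrand A (x, y)) ∂μ ∂μ
      = ∫ x, ∫ y, (A (x, y) - ((A (x, y) - A (x, y).swap) + klSwapIntegrand A (x, y))) ∂μ ∂μ := by
        simp only [Prod.swap_prod_mk, sub_add_eq_sub_sub, sub_sub_cancel]
    _ = _ := by
        rw [integral_integral_sub_integral_prod
            (g := fun z => (A z - A z.swap) + klSwapIntegrand A z) hA_slice hA_int (hD.add hKL),
          integral_add hD hKL, integral_sub_swap_eq_zero, zero_add]

theorem integral_integral_sub_klSwapIntegrand_le (hA : ∀ z, 0 < A z)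
    (hA_slice : ∀ᵐ x ∂μ, Integrable (fun y => A (x, y)) μ)
    (hA_int : Integrable (fun x => ∫ y, A (x, y) ∂μ) μ)
    (hKL : Integrable (klSwapIntegrand A) (μ.prod μ)) {r : α × α → ℝ} (hr : ∀ z, 0 < r z)
    (hr_swap : ∀ z, r z.swap = (r z)⁻¹)
    (hL : Integrable (fun z => A z * (Real.log (r z) + r z)) (μ.prod μ)) :
    ∫ x, ∫ y, A (x, y) ∂μ ∂μ - ∫ z, klSwapIntegrand A z ∂(μ.prod μ) ≤
      ∫ z, A z * (Real.log (r z) + r z) ∂(μ.prod μ) := by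
  set L := fun z => A z * (Real.log (r z) + r z)
  have hD := integrable_sub_swap hA hA_slice hA_int hKL.aestronglyMeasurable
  have hLF : Integrable (fun z => L z + klSwapIntegrand A z) (μ.prod μ) := hL.add hKL
  have hpair : ∀ z, 2 * A z ≤ (L z + klSwapIntegrand A z) +
      (L z.swap + klSwapIntegrand A z.swap) + (A z - A z.swap) := by
    intro z
    have h := Real.add_le_mul_log_add_mul_log_inv (hA z) (hA z.swap) (hr z)
    simp only [L, klSwapIntegrand, hr_swap, Prod.swap_swap]
    linarith
  have hbound := integral_integral_le_integral_prod (f := fun z => 2 * A z)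
    (g := fun z => (L z + klSwapIntegrand A z) + (L z.swap + klSwapIntegrand A z.swap) +
      (A z - A z.swap))
    (hA_slice.mono fun x hx => hx.const_mul 2)
    (by simpa only [integral_const_mul] using hA_int.const_mul 2)
    ((hLF.add hLF.swap).add hD) hpair
  rw [integral_add (f := fun z => (L z + klSwapIntegrand A z) +
      (L z.swap + klSwapIntegrand A z.swap)) (hLF.add hLF.swap) hD,
    integral_prod_add_swap hLF, integral_sub_swap_eq_zero, integral_add hL hKL] at hbound
  simp only [integral_const_mul] at hbound
  linarith

end Transpose

theorem optimal_discriminator_value_general {D : ℕ}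
    (q : (Fin D → ℝ) → (Fin D → ℝ) → ℝ) (p : (Fin D → ℝ) → ℝ)
    (dstar : (Fin D → ℝ) → (Fin D → ℝ) → ℝ)
    (hq_pos : ∀ x y, 0 < q x y) (hq_kernel : ∀ y, ∫ x, q x y = 1)
    (hp_pos : ∀ x, 0 < p x) (hp_norm : ∫ x, p x = 1)
    (hratio : ∀ x y, dstar x y / dstar y x = q y x * p x / (q x y * p y))
    (hKL_int : Integrable (fun z : ((Fin D → ℝ) × (Fin D → ℝ)) =>
      p z.1 * q z.2 z.1 * Real.log (q z.2 z.1 * p z.1 / (q z.1 z.2 * p z.2)))) :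
    (∀ d : (Fin D → ℝ) → (Fin D → ℝ) → ℝ, (∀ x y, 0 < d x y) →
      Integrable (fun z : ((Fin D → ℝ) × (Fin D → ℝ)) =>
        p z.1 * q z.2 z.1 * (Real.log (d z.2 z.1 / d z.1 z.2) + d z.2 z.1 / d z.1 z.2)) →
      (∫ x, ∫ y, p x * q y x *
          (Real.log (dstar y x / dstar x y) + dstar y x / dstar x y)) ≤
        ∫ x, ∫ y, p x * q y x * (Real.log (d y x / d x y) + d y x / d x y)) ∧
    (∫ x, ∫ y, p x * q y x *
        (Real.log (dstar y x / dstar x y) + dstar y x / dstar x y)) =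
      1 - ∫ x, ∫ y, p x * q y x * Real.log (q y x * p x / (q x y * p y)) := by
  set A : (Fin D → ℝ) × (Fin D → ℝ) → ℝ := fun z => p z.1 * q z.2 z.1
  have hA_pos : ∀ z, 0 < A z := fun z => mul_pos (hp_pos _) (hq_pos _ _)
  have hA_slice : ∀ x, Integrable (fun y => A (x, y)) :=
    fun x => (Integrable.of_integral_ne_zero (by simp [hq_kernel x])).const_mul (p x)
  have hA_marginal : ∀ x, ∫ y, A (x, y) = p x := fun x => by
    simp only [A, integral_const_mul, hq_kernel, mul_one]
  have hA_int : Integrable (fun x => ∫ y, A (x, y)) := by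
    simp only [hA_marginal]
    exact Integrable.of_integral_ne_zero (by simp [hp_norm])
  have hA_total : ∫ x, ∫ y, A (x, y) = 1 := by simp only [hA_marginal, hp_norm]
  have hKL_eq : (fun z => p z.1 * q z.2 z.1 * Real.log (q z.2 z.1 * p z.1 / (q z.1 z.2 * p z.2)))
      = klSwapIntegrand A := by
    funext z
    simp only [klSwapIntegrand, A, Prod.fst_swap, Prod.snd_swap, mul_comm (q _ _)]
  have hKL : Integrable (klSwapIntegrand A) (volume.prod volume) := hKL_eq ▸ hKL_int
  have hLstar : ∫ x, ∫ y, p x * q y x *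
      (Real.log (dstar y x / dstar x y) + dstar y x / dstar x y) =
      1 - ∫ z, klSwapIntegrand A z ∂(volume.prod volume) := by
    rw [← hA_total, ← integral_integral_swap_sub_klSwapIntegrand hA_pos (ae_of_all _ hA_slice)
      hA_int hKL]
    refine integral_congr_ae (ae_of_all _ fun x => integral_congr_ae (ae_of_all _ fun y => ?_))
    have hr : dstar y x / dstar x y = A (y, x) / A (x, y) := by
      rw [hratio y x]
      simp only [A]
      ring
    change A (x, y) * _ = _
    rw [hr, Real.mul_log_div_add_div_eq (hA_pos _).ne']
    rfl
  refine ⟨fun d hd_pos hd_int => ?_, by rw [hLstar, ← hKL_eq, integral_prod _ hKL_int]⟩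
  rw [hLstar, ← hA_total, ← integral_prod _ hd_int]
  exact integral_integral_sub_klSwapIntegrand_le hA_pos (ae_of_all _ hA_slice) hA_int hKL
    (r := fun z => d z.2 z.1 / d z.1 z.2) (fun z => div_pos (hd_pos _ _) (hd_pos _ _))
    (fun z => (inv_div _ _).symm) hd_int

/-- The discriminator `d*` whose ratio matches the joint density ratio,
`d*(x,y)/d*(y,x) = q(y|x)p(x)/(q(x|y)p(y))`, is a stationary (in fact
minimizing) point of the objective
`L(d) = E_{x∼p, y∼q(·|x)}[log(d(y,x)/d(x,y)) + d(y,x)/d(x,y)]`, and its value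
there is `1 − KL(q(y|x)p(x) ‖ q(x|y)p(y))`. -/
theorem optimal_discriminator_value {D : ℕ}
    (q : (Fin D → ℝ) → (Fin D → ℝ) → ℝ) (p : (Fin D → ℝ) → ℝ)
    (dstar : (Fin D → ℝ) → (Fin D → ℝ) → ℝ)
    (hq_pos : ∀ x y, 0 < q x y) (hq_kernel : ∀ y, ∫ x, q x y = 1)
    (hp_pos : ∀ x, 0 < p x) (hp_norm : ∫ x, p x = 1)
    (hdstar_pos : ∀ x y, 0 < dstar x y)
    (hratio : ∀ x y, dstar x y / dstar y x = q y x * p x / (q x y * p y))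
    (hKL_int : Integrable (fun z : ((Fin D → ℝ) × (Fin D → ℝ)) =>
      p z.1 * q z.2 z.1 * Real.log (q z.2 z.1 * p z.1 / (q z.1 z.2 * p z.2)))) :
    (∀ d : (Fin D → ℝ) → (Fin D → ℝ) → ℝ, (∀ x y, 0 < d x y) →
      Integrable (fun z : ((Fin D → ℝ) × (Fin D → ℝ)) =>
        p z.1 * q z.2 z.1 * (Real.log (d z.2 z.1 / d z.1 z.2) + d z.2 z.1 / d z.1 z.2)) →
      (∫ x, ∫ y, p x * q y x *
          (Real.log (dstar y x / dstar x y) + dstar y x / dstar x y)) ≤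
        ∫ x, ∫ y, p x * q y x * (Real.log (d y x / d x y) + d y x / d x y)) ∧
    (∫ x, ∫ y, p x * q y x *
        (Real.log (dstar y x / dstar x y) + dstar y x / dstar x y)) =
      1 - ∫ x, ∫ y, p x * q y x * Real.log (q y x * p x / (q x y * p y)) :=
  optimal_discriminator_value_general q p dstar hq_pos hq_kernel hp_pos hp_norm hratio hKL_int
end

section
/- For fixed positive reals a = p(x)q(y|x) and c = p(y)q(x|y), the function of the ratio r = d(x,y)/d(y,x) given by a(log(1/r) + 1/r) + c(log r + r) is minimized over r > 0 at r = a/c. -/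
/-!
Write `m = a / c` and `t = r / m`. Since `c * m = a`, the objective at `r` exceeds its value at
`m` by `a * (t - 1 - log t) + c * (t⁻¹ - 1 + log t)`, and both brackets are nonnegative by
`log t ≤ t - 1` applied to `t` and to `t⁻¹`.
-/

open Real

noncomputable def discriminatorObjective (a c r : ℝ) : ℝ :=
  a * (log (1 / r) + 1 / r) + c * (log r + r)

lemma discriminatorObjective_sub_eq {a c m r : ℝ} (hm : 0 < m) (hr : 0 < r) (hacm : a = c * m) :
    discriminatorObjective a c r - discriminatorObjective a c m =
      a * (r / m - 1 - log (r / m)) + c * ((r / m)⁻¹ - 1 + log (r / m)) := by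
  simp only [discriminatorObjective, one_div, log_inv, log_div hr.ne' hm.ne', inv_div]
  subst hacm
  field_simp
  ring

lemma discriminatorObjective_le {a c m r : ℝ} (ha : 0 ≤ a) (hc : 0 ≤ c) (hm : 0 < m) (hr : 0 < r)
    (hacm : a = c * m) :
    discriminatorObjective a c m ≤ discriminatorObjective a c r := by
  have ht : 0 < r / m := div_pos hr hm
  have h₁ : 0 ≤ r / m - 1 - log (r / m) := by linarith [log_le_sub_one_of_pos ht]
  have h₂ : 0 ≤ (r / m)⁻¹ - 1 + log (r / m) := by linarith [one_sub_inv_le_log_of_pos ht]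
  linarith [discriminatorObjective_sub_eq hm hr hacm, mul_nonneg ha h₁, mul_nonneg hc h₂]

/-- Pointwise minimization of the discriminator objective: for fixed `a, c > 0`,
the function `r ↦ a (log(1/r) + 1/r) + c (log r + r)` on `(0, ∞)` is minimized
at `r = a/c`. -/
theorem pointwise_objective_minimizer (a c : ℝ) (ha : 0 < a) (hc : 0 < c) :
    ∀ r : ℝ, 0 < r →
      a * (Real.log (1 / (a / c)) + 1 / (a / c)) + c * (Real.log (a / c) + a / c) ≤
        a * (Real.log (1 / r) + 1 / r) + c * (Real.log r + r) := fun _ hr =>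
  discriminatorObjective_le ha.le hc.le (div_pos ha hc) hr (mul_div_cancel₀ a hc.ne').symm
end
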